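/- For every partition λ, every n, and every 1 ≤ i < n, the Young lowering operator f_i maps SSYT_n(λ) to SSYT_n(λ) ∪ {0}: if T ∈ SSYT_n(λ) and f_i(T) ≠ 0, then f_i(T) is again a semistandard Young tableau of shape λ with entries in {1,…,n}, and wt(f_i(T)) is obtained from wt(T) by decreasing the i-th part by 1 and increasing the (i+1)-st part by 1. -/

import Mathlib

/-! ## Reading words and the lowering operators on Mathlib's semistandard
Young tableaux.

Mathlib uses the English convention with rows indexed from the top starting at
`0`; the paper's row reading word (rows left to right, from the top row of the
French diagram to the bottom one) therefore reads the rows in order of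
decreasing Mathlib row index. -/

/-- The cells of the Young diagram `μ` in reading order: rows left to right,
from the bottom row (in English convention) to the top one. -/
def readingCells (μ : YoungDiagram) : List (ℕ × ℕ) :=
  ((List.range (μ.colLen 0)).reverse).flatMap (fun i =>
    (List.range (μ.rowLen i)).map (fun j => (i, j)))

/-- The row reading word of a semistandard Young tableau. -/
def rowWord {μ : YoungDiagram} (T : SemistandardYoungTableau μ) : List ℕ :=
  (readingCells μ).map (fun rc => T rc.1 rc.2)

/-- `mAt i w r` is `m_i(w, r)`: the number of `i`'s minus the number of
`(i+1)`'s among the first `r` letters of `w`. -/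
def mAt (i : ℕ) (w : List ℕ) (r : ℕ) : ℤ :=
  ((w.take r).count i : ℤ) - ((w.take r).count (i + 1) : ℤ)

/-- `mMax i w` is `m_i(w) = max_{1 ≤ r ≤ |w|} m_i(w, r)` (with value `0` for the
empty word). -/
def mMax (i : ℕ) (w : List ℕ) : ℤ :=
  WithBot.unbotD 0 (@List.maximum ℤ Int.instLinearOrder.toPartialOrder.toPreorder Int.decLt ((List.range w.length).map (fun r => mAt i w (r + 1))))

/-- The 0-based position in the reading word of a tableau used by the lowering
operator `f_i`: the smallest index at which `m_i` attains its maximum. -/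
def lowerIdx {μ : YoungDiagram} (i : ℕ) (T : SemistandardYoungTableau μ) : ℕ :=
  (List.range (rowWord T).length).findIdx
    (fun r => decide (mAt i (rowWord T) (r + 1) = mMax i (rowWord T)))

/-- The lowering operator `f_i` on (fillings of) semistandard Young tableaux:
`youngLowerFun i T = none` when `f_i(T) = 0` (i.e. `m_i(w(T)) ≤ 0`); otherwise
the entry at the cell corresponding to the leftmost position attaining
`m_i(w(T))` is changed to `i + 1`. -/
def youngLowerFun {μ : YoungDiagram} (i : ℕ) (T : SemistandardYoungTableau μ) :
    Option (ℕ → ℕ → ℕ) :=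
  if mMax i (rowWord T) ≤ 0 then none
  else
    match (readingCells μ)[lowerIdx i T]? with
    | none => none
    | some q => some (fun a b => if (a, b) = q then i + 1 else T a b)

/-- The weight of a filling of `μ`: the number of cells with entry `k`. -/
def wtM (μ : YoungDiagram) (f : ℕ → ℕ → ℕ) (k : ℕ) : ℕ :=
  (μ.cells.filter (fun rc => f rc.1 rc.2 = k)).card

/-! The leftmost maximiser `p` of `r ↦ m_i(w(T), r + 1)` carries an `i`, since `m_i` strictly
increases there. The entry to its right is not `i`, for otherwise `m_i` would exceed its maximum
one step later. If the entry below it were `i + 1`, then every `i` of its row up to that cell would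
sit above an `i + 1`, and cutting the word of the row below just before its first entry exceeding
`i` gives an earlier prefix on which `m_i` is already maximal. So raising this `i` to `i + 1`
keeps rows weak and columns strict, and moves one unit of weight from `i` to `i + 1`. -/

section Words

/-- `m_i(l, |l|)`. -/
def imbalance (i : ℕ) (l : List ℕ) : ℤ :=
  (l.count i : ℤ) - (l.count (i + 1) : ℤ)

theorem mAt_eq_imbalance (i : ℕ) (w : List ℕ) (r : ℕ) : mAt i w r = imbalance i (w.take r) :=
  rfl

theorem imbalance_append (i : ℕ) (l₁ l₂ : List ℕ) :
    imbalance i (l₁ ++ l₂) = imbalance i l₁ + imbalance i l₂ := by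
  simp only [imbalance, List.count_append]
  push_cast
  ring

theorem imbalance_singleton_self (i : ℕ) : imbalance i [i] = 1 := by
  simp [imbalance]

theorem imbalance_singleton_nonpos {i x : ℕ} (h : x ≠ i) : imbalance i [x] ≤ 0 := by
  simp only [imbalance, List.count_singleton, beq_iff_eq]
  split_ifs <;> omega

theorem imbalance_of_succ_notMem {i : ℕ} {l : List ℕ} (h : i + 1 ∉ l) :
    imbalance i l = l.count i := by
  simp [imbalance, List.count_eq_zero.2 h]

theorem imbalance_of_notMem {i : ℕ} {l : List ℕ} (h : i ∉ l) :
    imbalance i l = -(l.count (i + 1) : ℤ) := by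
  simp [imbalance, List.count_eq_zero.2 h]

theorem mAt_zero (i : ℕ) (w : List ℕ) : mAt i w 0 = 0 := by
  simp [mAt]

theorem mAt_of_length_le {i : ℕ} {w : List ℕ} {r : ℕ} (h : w.length ≤ r) :
    mAt i w r = mAt i w w.length := by
  simp [mAt_eq_imbalance, List.take_of_length_le h]

theorem mMax_eq_maximum_of_length_pos {i : ℕ} {w : List ℕ} (hw : 0 < w.length) :
    mMax i w = List.maximum_of_length_pos
      (l := (List.range w.length).map (fun r => mAt i w (r + 1))) (by simpa using hw) := by
  rw [mMax, ← List.coe_maximum_of_length_pos, WithBot.unbotD_coe]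

theorem length_pos_of_mMax_pos {i : ℕ} {w : List ℕ} (h : 0 < mMax i w) : 0 < w.length := by
  rcases w with _ | ⟨x, w⟩
  · exact (lt_irrefl 0 h).elim
  · simp

theorem mAt_le_mMax {i : ℕ} {w : List ℕ} (h : 0 < mMax i w) (r : ℕ) : mAt i w r ≤ mMax i w := by
  have hw := length_pos_of_mMax_pos h
  rcases r with _ | s
  · rw [mAt_zero]
    exact h.le
  obtain ⟨t, ht, hts⟩ : ∃ t < w.length, mAt i w (s + 1) = mAt i w (t + 1) := by
    by_cases hs : s < w.length
    · exact ⟨s, hs, rfl⟩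
    · refine ⟨w.length - 1, by omega, ?_⟩
      rw [mAt_of_length_le (by omega), Nat.sub_add_cancel hw]
  rw [hts, mMax_eq_maximum_of_length_pos hw]
  exact List.le_maximum_of_length_pos_of_mem
    (List.mem_map_of_mem (f := fun r => mAt i w (r + 1)) (List.mem_range.2 ht)) _

theorem exists_mAt_eq_mMax {i : ℕ} {w : List ℕ} (h : 0 < mMax i w) :
    ∃ r < w.length, mAt i w (r + 1) = mMax i w := by
  have hw := length_pos_of_mMax_pos h
  obtain ⟨r, hr, hmax⟩ := List.mem_map.1 (List.maximum_of_length_pos_mem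
    (l := (List.range w.length).map (fun r => mAt i w (r + 1))) (by simpa using hw))
  exact ⟨r, List.mem_range.1 hr, by rw [hmax, mMax_eq_maximum_of_length_pos hw]⟩

/-- For `w = rowWord T` the index `p` is `lowerIdx i T`. -/
theorem findIdx_mAt_eq_mMax {i : ℕ} {w : List ℕ} (h : 0 < mMax i w) {p : ℕ}
    (hp : (List.range w.length).findIdx (fun r => decide (mAt i w (r + 1) = mMax i w)) = p) :
    p < w.length ∧ mAt i w (p + 1) = mMax i w ∧ ∀ r ≤ p, mAt i w r < mMax i w := by
  obtain ⟨r₀, hr₀, hr₀max⟩ := exists_mAt_eq_mMax h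
  have hlt : p < w.length := by
    simpa [← hp] using List.findIdx_lt_length_of_exists
      ⟨r₀, List.mem_range.2 hr₀, decide_eq_true hr₀max⟩
  obtain ⟨hpmax, hbefore⟩ := (List.findIdx_eq (by simpa using hlt)).1 hp
  simp only [List.getElem_range, decide_eq_true_eq, decide_eq_false_iff_not] at hpmax hbefore
  refine ⟨hlt, hpmax, fun r hr => ?_⟩
  rcases r with _ | s
  · rw [mAt_zero]
    exact h
  · exact lt_of_le_of_ne (mAt_le_mMax h _) (hbefore s (by omega))

theorem List.count_le_count_of_getElem {α : Type*} [BEq α] [LawfulBEq α] {x y : α} :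
    ∀ {l₁ l₂ : List α} (hlen : l₁.length ≤ l₂.length),
      (∀ c (hc : c < l₁.length), l₁[c] = x → l₂[c] = y) → l₁.count x ≤ l₂.count y
  | [], _, _, _ => by simp
  | _ :: _, [], hlen, _ => by simp at hlen
  | u :: l₁, v :: l₂, hlen, h => by
    have ih := List.count_le_count_of_getElem (l₁ := l₁) (l₂ := l₂) (by simpa using hlen)
      fun c hc => h (c + 1) (by simpa using hc)
    have hvu : u = x → v = y := h 0 (by simp)
    by_cases hu : u = x
    · simpa [List.count_cons, hu, hvu hu] using ih
    · simp only [List.count_cons, beq_iff_eq, hu, if_false]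
      split_ifs <;> omega

theorem exists_take_drop_of_pairwise_le (i : ℕ) :
    ∀ {l : List ℕ}, l.Pairwise (· ≤ ·) → ∃ j ≤ l.length, i + 1 ∉ l.take j ∧ i ∉ l.drop j
  | [], _ => ⟨0, le_rfl, by simp, by simp⟩
  | x :: l, hl => by
    rw [List.pairwise_cons] at hl
    by_cases hx : x ≤ i
    · obtain ⟨j, hj, htake, hdrop⟩ := exists_take_drop_of_pairwise_le i hl.2
      exact ⟨j + 1, by simpa using hj, by simp [htake]; omega, by simpa using hdrop⟩
    · refine ⟨0, by simp, by simp, ?_⟩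
      intro hi
      rcases List.mem_cons.1 (by simpa using hi) with h | h
      · omega
      · exact hx (hl.1 i h)

/-- The word inequality behind the column condition: `l` is a row and `r` a prefix of the row
above it, each `i` of `r` standing over an `i + 1` of `l`. -/
theorem exists_imbalance_add_le_imbalance_take {i : ℕ} {l r : List ℕ}
    (hl : l.Pairwise (· ≤ ·)) (hr : i + 1 ∉ r) (hcount : r.count i ≤ l.count (i + 1)) :
    ∃ j ≤ l.length, imbalance i l + imbalance i r ≤ imbalance i (l.take j) := by
  obtain ⟨j, hj, htake, hdrop⟩ := exists_take_drop_of_pairwise_le i hl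
  refine ⟨j, hj, ?_⟩
  have hcount' : l.count (i + 1) = (l.drop j).count (i + 1) := by
    conv_lhs => rw [← List.take_append_drop j l]
    rw [List.count_append, List.count_eq_zero.2 htake, zero_add]
  have hsplit : imbalance i l = imbalance i (l.take j) - l.count (i + 1) := by
    conv_lhs => rw [← List.take_append_drop j l]
    rw [imbalance_append, imbalance_of_notMem hdrop, hcount', sub_eq_add_neg]
  rw [hsplit, imbalance_of_succ_notMem hr]
  omega

end Words

section ReadingOrder

variable {μ : YoungDiagram}

def rowCells (μ : YoungDiagram) (r : ℕ) : List (ℕ × ℕ) :=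
  (List.range (μ.rowLen r)).map (r, ·)

/-- The cells read before row `a`, i.e. those of the rows below it in English convention. -/
def cellsBelow (μ : YoungDiagram) (a : ℕ) : List (ℕ × ℕ) :=
  (List.range' (a + 1) (μ.colLen 0 - (a + 1))).reverse.flatMap (rowCells μ)

theorem readingCells_eq_flatMap (μ : YoungDiagram) :
    readingCells μ = (List.range (μ.colLen 0)).reverse.flatMap (rowCells μ) :=
  rfl

theorem readingCells_eq_append {a : ℕ} (ha : a < μ.colLen 0) :
    ∃ rest, readingCells μ = cellsBelow μ a ++ rowCells μ a ++ rest := by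
  have hrange : List.range (μ.colLen 0)
      = List.range a ++ [a] ++ List.range' (a + 1) (μ.colLen 0 - (a + 1)) := by
    rw [← List.range_succ, List.range_eq_range', List.range_eq_range', List.range'_eq_append_iff]
    exact ⟨a + 1, ha, rfl, by simp⟩
  refine ⟨(List.range a).reverse.flatMap (rowCells μ), ?_⟩
  simp [readingCells_eq_flatMap, hrange, cellsBelow]

theorem cellsBelow_eq_append {a : ℕ} (ha : a + 1 < μ.colLen 0) :
    cellsBelow μ a = cellsBelow μ (a + 1) ++ rowCells μ (a + 1) := by
  rw [cellsBelow, cellsBelow,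
    show μ.colLen 0 - (a + 1) = μ.colLen 0 - (a + 1 + 1) + 1 by omega, List.range'_succ]
  simp

theorem mem_of_mem_readingCells {q : ℕ × ℕ} (hq : q ∈ readingCells μ) : q ∈ μ := by
  simp only [readingCells_eq_flatMap, rowCells, List.mem_flatMap, List.mem_reverse,
    List.mem_range, List.mem_map] at hq
  obtain ⟨r, -, c, hc, rfl⟩ := hq
  exact YoungDiagram.mem_iff_lt_rowLen.2 hc

theorem nodup_readingCells (μ : YoungDiagram) : (readingCells μ).Nodup := by
  rw [readingCells_eq_flatMap, List.nodup_flatMap]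
  refine ⟨fun r _ => List.nodup_range.map (Prod.mk_right_injective r), ?_⟩
  refine List.pairwise_reverse.2 (List.nodup_range.pairwise_of_forall_ne fun r _ s _ hrs => ?_)
  simp only [Function.onFun, List.disjoint_left, rowCells, List.mem_map]
  rintro _ ⟨c, -, rfl⟩ ⟨d, -, hd⟩
  exact hrs (congrArg Prod.fst hd)

theorem lt_colLen_zero_of_mem {a b : ℕ} (hab : (a, b) ∈ μ) : a < μ.colLen 0 :=
  (YoungDiagram.mem_iff_lt_colLen.1 hab).trans_le (μ.colLen_anti 0 b b.zero_le)

theorem getElem_readingCells_eq_iff {p a b : ℕ} (hp : p < (readingCells μ).length) :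
    (readingCells μ)[p] = (a, b) ↔ (a, b) ∈ μ ∧ p = (cellsBelow μ a).length + b := by
  have hcell : ∀ {a b : ℕ}, (a, b) ∈ μ →
      (readingCells μ)[(cellsBelow μ a).length + b]? = some (a, b) := by
    intro a b hab
    obtain ⟨rest, hsplit⟩ := readingCells_eq_append (lt_colLen_zero_of_mem hab)
    have hb : b < μ.rowLen a := YoungDiagram.mem_iff_lt_rowLen.1 hab
    simp [hsplit, rowCells, List.getElem?_append_right, List.getElem?_append_left, hb]
  constructor
  · intro h
    have hab : (a, b) ∈ μ := mem_of_mem_readingCells (h ▸ List.getElem_mem hp)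
    obtain ⟨hj, hj'⟩ := List.getElem?_eq_some_iff.1 (hcell hab)
    exact ⟨hab, ((nodup_readingCells μ).getElem_inj_iff).1 (h.trans hj'.symm)⟩
  · rintro ⟨hab, rfl⟩
    exact (List.getElem?_eq_some_iff.1 (hcell hab)).2

end ReadingOrder

namespace SemistandardYoungTableau

variable {μ : YoungDiagram}

def raiseEntry (T : SemistandardYoungTableau μ) {a b i : ℕ} (hab : (a, b) ∈ μ) (hT : T a b = i)
    (hright : (a, b + 1) ∈ μ → T a (b + 1) ≠ i)
    (hbelow : (a + 1, b) ∈ μ → T (a + 1) b ≠ i + 1) :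
    SemistandardYoungTableau μ where
  entry a' b' := if (a', b') = (a, b) then i + 1 else T a' b'
  row_weak' := by
    intro a' c d hcd hd
    simp only [Prod.mk.injEq]
    split_ifs with h₁ h₂ h₂
    · omega
    · obtain ⟨rfl, rfl⟩ := h₁
      have hmem := μ.up_left_mem le_rfl (show _ + 1 ≤ d from hcd) hd
      have hle := T.row_weak_of_le (show _ + 1 ≤ d from hcd) hd
      have hge := T.row_weak (Nat.lt_add_one _) hmem
      have hne := hright hmem
      omega
    · obtain ⟨rfl, rfl⟩ := h₂
      have := T.row_weak hcd hd
      omega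
    · exact T.row_weak hcd hd
  col_strict' := by
    intro c d b' hcd hd
    simp only [Prod.mk.injEq]
    split_ifs with h₁ h₂ h₂
    · omega
    · obtain ⟨rfl, rfl⟩ := h₁
      have hmem := μ.up_left_mem (show _ + 1 ≤ d from hcd) le_rfl hd
      have hle := T.col_weak (show _ + 1 ≤ d from hcd) hd
      have hgt := T.col_strict (Nat.lt_add_one _) hmem
      have hne := hbelow hmem
      omega
    · obtain ⟨rfl, rfl⟩ := h₂
      have := T.col_strict hcd hd
      omega
    · exact T.col_strict hcd hd
  zeros' := by
    intro a' b' h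
    rw [if_neg (show (a', b') ≠ (a, b) from fun h' => h (h' ▸ hab))]
    exact T.zeros h

variable (T : SemistandardYoungTableau μ)

theorem pairwise_le_map_range {r ℓ : ℕ} (hℓ : ℓ ≤ μ.rowLen r) :
    ((List.range ℓ).map (T r)).Pairwise (· ≤ ·) := by
  rw [List.pairwise_map]
  refine List.pairwise_lt_range.imp_of_mem fun _ hd hcd => T.row_weak hcd ?_
  exact YoungDiagram.mem_iff_lt_rowLen.2 ((List.mem_range.1 hd).trans_le hℓ)

theorem map_rowCells (r : ℕ) :
    (rowCells μ r).map (fun q => T q.1 q.2) = (List.range (μ.rowLen r)).map (T r) := by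
  simp [rowCells, Function.comp_def]

theorem take_rowWord {a c : ℕ} (ha : a < μ.colLen 0) (hc : c ≤ μ.rowLen a) :
    (rowWord T).take ((cellsBelow μ a).length + c)
      = (cellsBelow μ a).map (fun q => T q.1 q.2) ++ (List.range c).map (T a) := by
  obtain ⟨rest, hsplit⟩ := readingCells_eq_append ha
  rw [rowWord, hsplit, List.map_append, List.map_append, List.append_assoc,
    ← List.length_map (f := fun q : ℕ × ℕ => T q.1 q.2), List.take_length_add_append,
    map_rowCells, List.take_append_of_le_length (by simpa using hc), ← List.map_take,
    List.take_range, min_eq_left hc]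

theorem mAt_rowWord (i : ℕ) {a c : ℕ} (ha : a < μ.colLen 0) (hc : c ≤ μ.rowLen a) :
    mAt i (rowWord T) ((cellsBelow μ a).length + c)
      = imbalance i ((cellsBelow μ a).map (fun q => T q.1 q.2))
        + imbalance i ((List.range c).map (T a)) := by
  rw [mAt_eq_imbalance, T.take_rowWord ha hc, imbalance_append]

theorem mAt_rowWord_succ (i : ℕ) {a b : ℕ} (hab : (a, b) ∈ μ) :
    mAt i (rowWord T) ((cellsBelow μ a).length + (b + 1))
      = mAt i (rowWord T) ((cellsBelow μ a).length + b) + imbalance i [T a b] := by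
  have ha := lt_colLen_zero_of_mem hab
  have hb := YoungDiagram.mem_iff_lt_rowLen.1 hab
  rw [T.mAt_rowWord i ha hb, T.mAt_rowWord i ha hb.le, List.range_succ, List.map_append,
    imbalance_append, List.map_singleton, add_assoc]

variable {T} {i a b : ℕ}

theorem entry_eq_of_mAt_lt_mAt_succ (hab : (a, b) ∈ μ)
    (h : mAt i (rowWord T) ((cellsBelow μ a).length + b)
      < mAt i (rowWord T) ((cellsBelow μ a).length + (b + 1))) :
    T a b = i := by
  by_contra hne
  linarith [T.mAt_rowWord_succ i hab, imbalance_singleton_nonpos hne]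

theorem entry_right_ne_of_forall_mAt_le
    (h : ∀ r, mAt i (rowWord T) r ≤ mAt i (rowWord T) ((cellsBelow μ a).length + (b + 1)))
    (hright : (a, b + 1) ∈ μ) :
    T a (b + 1) ≠ i := by
  intro hT
  have hstep := T.mAt_rowWord_succ i hright
  rw [hT, imbalance_singleton_self] at hstep
  linarith [h ((cellsBelow μ a).length + (b + 1 + 1))]

theorem entry_below_ne_of_forall_mAt_lt (hab : (a, b) ∈ μ) (hT : T a b = i)
    (h : ∀ r ≤ (cellsBelow μ a).length + b,
      mAt i (rowWord T) r < mAt i (rowWord T) ((cellsBelow μ a).length + (b + 1)))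
    (hbelow : (a + 1, b) ∈ μ) :
    T (a + 1) b ≠ i + 1 := by
  intro hT₁
  have hK : a + 1 < μ.colLen 0 := lt_colLen_zero_of_mem hbelow
  have hb₁ : b < μ.rowLen (a + 1) := YoungDiagram.mem_iff_lt_rowLen.1 hbelow
  set R₁ := (List.range (μ.rowLen (a + 1))).map (T (a + 1)) with hR₁
  set R₀ := (List.range (b + 1)).map (T a) with hR₀
  have hsucc : i + 1 ∉ R₀ := by
    simp only [hR₀, List.mem_map, List.mem_range, not_exists, not_and]
    intro c hc hci
    have := T.row_weak_of_le (Nat.lt_succ_iff.1 hc) hab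
    omega
  have hcount : R₀.count i ≤ R₁.count (i + 1) := by
    refine List.count_le_count_of_getElem (by simpa [hR₀, hR₁] using hb₁) fun c hc hci => ?_
    have hcb : c ≤ b := by simpa [hR₀, Nat.lt_succ_iff] using hc
    simp only [hR₀, hR₁, List.getElem_map, List.getElem_range] at hci ⊢
    have hlt := T.col_strict (Nat.lt_add_one a) (μ.up_left_mem le_rfl hcb hbelow)
    have hle := T.row_weak_of_le hcb hbelow
    omega
  obtain ⟨j, hj, hgain⟩ := exists_imbalance_add_le_imbalance_take
    (T.pairwise_le_map_range le_rfl) hsucc hcount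
  rw [← hR₁] at hgain
  simp only [List.length_map, List.length_range] at hj
  have hB := cellsBelow_eq_append hK
  have hlen : (cellsBelow μ a).length = (cellsBelow μ (a + 1)).length + μ.rowLen (a + 1) := by
    simp [hB, rowCells]
  have hat : mAt i (rowWord T) ((cellsBelow μ a).length + (b + 1))
      = imbalance i ((cellsBelow μ (a + 1)).map (fun q => T q.1 q.2)) + imbalance i R₁
        + imbalance i R₀ := by
    rw [T.mAt_rowWord i (lt_colLen_zero_of_mem hab) (YoungDiagram.mem_iff_lt_rowLen.1 hab), hB,
      List.map_append, imbalance_append, map_rowCells]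
  have hbefore : mAt i (rowWord T) ((cellsBelow μ (a + 1)).length + j)
      = imbalance i ((cellsBelow μ (a + 1)).map (fun q => T q.1 q.2))
        + imbalance i (R₁.take j) := by
    rw [T.mAt_rowWord i hK hj, hR₁, ← List.map_take, List.take_range, min_eq_left hj]
  linarith [h ((cellsBelow μ (a + 1)).length + j) (by omega)]

end SemistandardYoungTableau

theorem wtM_ite_add (μ : YoungDiagram) (f : ℕ → ℕ → ℕ) {q : ℕ × ℕ} (hq : q ∈ μ) (v k : ℕ) :
    wtM μ (fun a b => if (a, b) = q then v else f a b) k + (if f q.1 q.2 = k then 1 else 0)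
      = wtM μ f k + (if v = k then 1 else 0) := by
  have hq' : q ∈ μ.cells := hq
  simp only [wtM, Finset.card_filter]
  rw [← Finset.add_sum_erase _ _ hq', ← Finset.add_sum_erase _ _ hq',
    Finset.sum_congr rfl fun x hx => by rw [if_neg (Finset.ne_of_mem_erase hx)]]
  simp only [Prod.mk.eta, if_true]
  ring

open SemistandardYoungTableau in
theorem exists_cell_of_youngLowerFun_eq_some {μ : YoungDiagram} {i : ℕ}
    {T : SemistandardYoungTableau μ} {g : ℕ → ℕ → ℕ} (hg : youngLowerFun i T = some g) :
    ∃ a b, (a, b) ∈ μ ∧ T a b = i ∧ ((a, b + 1) ∈ μ → T a (b + 1) ≠ i) ∧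
      ((a + 1, b) ∈ μ → T (a + 1) b ≠ i + 1) ∧
      g = fun a' b' => if (a', b') = (a, b) then i + 1 else T a' b' := by
  unfold youngLowerFun at hg
  split_ifs at hg with hM
  replace hM := not_le.1 hM
  obtain ⟨hp, hmax, hfirst⟩ := findIdx_mAt_eq_mMax hM (rfl : _ = lowerIdx i T)
  have hp' : lowerIdx i T < (readingCells μ).length := by simpa [rowWord] using hp
  obtain ⟨⟨a, b⟩, hq⟩ : ∃ q, (readingCells μ)[lowerIdx i T] = q := ⟨_, rfl⟩
  rw [List.getElem?_eq_getElem hp', hq] at hg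
  obtain ⟨hab, hpos⟩ := (getElem_readingCells_eq_iff hp').1 hq
  rw [hpos, add_assoc] at hmax
  rw [hpos] at hfirst
  have hT := entry_eq_of_mAt_lt_mAt_succ hab (hmax ▸ hfirst _ le_rfl)
  exact ⟨a, b, hab, hT, entry_right_ne_of_forall_mAt_le (hmax ▸ mAt_le_mMax hM),
    entry_below_ne_of_forall_mAt_lt hab hT (hmax ▸ hfirst), (Option.some.inj hg).symm⟩

theorem young_lower_maps_to_general (μ : YoungDiagram) (n : ℕ) (i : ℕ)
    (h2 : i < n) (T : SemistandardYoungTableau μ)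
    (hpos : ∀ rc ∈ μ.cells, 1 ≤ T rc.1 rc.2)
    (hle : ∀ rc ∈ μ.cells, T rc.1 rc.2 ≤ n)
    (g : ℕ → ℕ → ℕ) (hg : youngLowerFun i T = some g) :
    (∃ S : SemistandardYoungTableau μ,
      (∀ a b, S a b = g a b) ∧
      (∀ rc ∈ μ.cells, 1 ≤ S rc.1 rc.2 ∧ S rc.1 rc.2 ≤ n)) ∧
    wtM μ g i + 1 = wtM μ (fun a b => T a b) i ∧
    wtM μ g (i + 1) = wtM μ (fun a b => T a b) (i + 1) + 1 ∧
    (∀ k, k ≠ i → k ≠ i + 1 → wtM μ g k = wtM μ (fun a b => T a b) k) := by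
  obtain ⟨a, b, hab, hT, hright, hbelow, rfl⟩ := exists_cell_of_youngLowerFun_eq_some hg
  have hwt := wtM_ite_add μ (fun a b => T a b) hab (i + 1)
  refine ⟨⟨T.raiseEntry hab hT hright hbelow, fun _ _ => rfl, fun rc hrc => ?_⟩, ?_, ?_,
    fun k hk hk' => ?_⟩
  · show 1 ≤ ite _ _ _ ∧ ite _ _ _ ≤ n
    split_ifs
    · omega
    · exact ⟨hpos rc hrc, hle rc hrc⟩
  · simpa [hT] using hwt i
  · simpa [hT] using hwt (i + 1)
  · simpa [hT, Ne.symm hk, Ne.symm hk'] using hwt k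

/-- For `1 ≤ i < n`, the lowering operator `f_i` maps
`SSYT_n(λ)` into `SSYT_n(λ) ∪ {0}`: if `f_i(T) ≠ 0` then `f_i(T)` is again a
semistandard Young tableau of shape `λ` with entries in `{1, …, n}`, and its
weight is obtained from `wt(T)` by decreasing the `i`-th part by `1` and
increasing the `(i+1)`-st part by `1`. -/
theorem young_lower_maps_to (μ : YoungDiagram) (n : ℕ) (i : ℕ)
    (h1 : 1 ≤ i) (h2 : i < n) (T : SemistandardYoungTableau μ)
    (hpos : ∀ rc ∈ μ.cells, 1 ≤ T rc.1 rc.2)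
    (hle : ∀ rc ∈ μ.cells, T rc.1 rc.2 ≤ n)
    (g : ℕ → ℕ → ℕ) (hg : youngLowerFun i T = some g) :
    (∃ S : SemistandardYoungTableau μ,
      (∀ a b, S a b = g a b) ∧
      (∀ rc ∈ μ.cells, 1 ≤ S rc.1 rc.2 ∧ S rc.1 rc.2 ≤ n)) ∧
    wtM μ g i + 1 = wtM μ (fun a b => T a b) i ∧
    wtM μ g (i + 1) = wtM μ (fun a b => T a b) (i + 1) + 1 ∧
    (∀ k, k ≠ i → k ≠ i + 1 → wtM μ g k = wtM μ (fun a b => T a b) k) :=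
  young_lower_maps_to_general μ n i h2 T hpos hle g hg
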